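/- arXiv:1905.06400 — 2 statements merged into one kernel-verified Lean document; each statement's English description precedes it below -/
import Mathlib

section
/- Let 𝓜 = [M_{ijk}] ∈ ℝ^{N×T×K} be a third-order tensor of CP rank r, so that M_{ijk} = Σ_{z=1}^r U_{iz} V_{jz} W_{kz} for some U ∈ ℝ^{N×r}, V ∈ ℝ^{T×r}, W ∈ ℝ^{K×r}. Let the index i₀ of the target unit be chosen uniformly at random from {1,…,N}. Then with probability at least 1 − r/N there exists a vector β* ∈ ℝ^{N−1}, indexed by the remaining units z ∈ {1,…,N} \ {i₀}, such that M_{i₀ j k} = Σ_{z ≠ i₀} β*_z · M_{z j k} simultaneously for all j ∈ [T] and all k ∈ [K]. -/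
/-!
Write `M i = L (U i)`, where `L : ℝ^r → ℝ^{T×K}` is the linear map `u ↦ ∑_z u_z (V_z ⊗ W_z)`.
Call `i` essential for a family if its vector is not in the span of the others. The essential
vectors of a family are linearly independent, so `U` has at most `r` essential indices; every
other `U i` is a combination of the `U z`, `z ≠ i`, and applying `L` gives the same combination
for `M i`. Hence at least `N - r` of the `N` units are combinations of the donors.
-/

open Finset Module Submodule

section EssentialIndices

variable {𝕜 E F ι : Type*} [Fintype ι] [DecidableEq ι]

theorem ncard_notMem_span_image_erase_le_finrank [DivisionRing 𝕜] [AddCommGroup E]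
    [Module 𝕜 E] [Module.Finite 𝕜 E] (v : ι → E) :
    {i | v i ∉ span 𝕜 (v '' ↑(univ.erase i))}.ncard ≤ finrank 𝕜 E := by
  classical
  set s := {i | v i ∉ span 𝕜 (v '' ↑(univ.erase i))}
  have hli : LinearIndependent 𝕜 (fun i : s => v i) := by
    refine linearIndependent_iff_notMem_span.2 fun i hi => i.2 (span_mono ?_ hi)
    rintro _ ⟨j, hj, rfl⟩
    exact ⟨j, by simpa [Subtype.ext_iff] using hj, rfl⟩
  rw [← Nat.card_coe_set_eq, Nat.card_eq_fintype_card]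
  exact hli.fintype_card_le_finrank

theorem card_sub_finrank_le_ncard_mem_span_image_erase [DivisionRing 𝕜] [AddCommGroup E]
    [Module 𝕜 E] [Module.Finite 𝕜 E] (v : ι → E) :
    Fintype.card ι - finrank 𝕜 E ≤ {i | v i ∈ span 𝕜 (v '' ↑(univ.erase i))}.ncard := by
  have hsplit := Set.ncard_add_ncard_compl {i | v i ∈ span 𝕜 (v '' ↑(univ.erase i))}
  rw [Set.compl_ofPred, Nat.card_eq_fintype_card] at hsplit
  have := ncard_notMem_span_image_erase_le_finrank (𝕜 := 𝕜) v
  omega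

theorem setOf_mem_span_image_erase_subset_comp [Semiring 𝕜] [AddCommMonoid E] [Module 𝕜 E]
    [AddCommMonoid F] [Module 𝕜 F] (f : E →ₗ[𝕜] F) (v : ι → E) :
    {i | v i ∈ span 𝕜 (v '' ↑(univ.erase i))} ⊆
      {i | (f ∘ v) i ∈ span 𝕜 ((f ∘ v) '' ↑(univ.erase i))} := fun i hi => by
  rw [Set.mem_ofPred_eq, Set.image_comp]
  exact apply_mem_span_image_of_mem_span f hi

end EssentialIndices

/-- Proposition 4.1: for a CP rank-`r` tensor, a uniformly random target unit
`i₀` is, with probability at least `1 - r/N`, a fixed linear combination of the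
remaining (donor) units simultaneously across all times `j` and metrics `k`. -/
theorem stmt_1 (N T K r : ℕ) (hN : 0 < N)
    (M : Fin N → Fin T → Fin K → ℝ)
    (U : Fin N → Fin r → ℝ) (V : Fin T → Fin r → ℝ) (W : Fin K → Fin r → ℝ)
    (hM : ∀ i j k, M i j k = ∑ z, U i z * V j z * W k z) :
    (1 : ℝ) - (r : ℝ) / N ≤
      (Set.ncard {i₀ : Fin N | ∃ β : Fin N → ℝ,
        ∀ j k, M i₀ j k = ∑ z ∈ Finset.univ.erase i₀, β z * M z j k} : ℝ) / N := by
  set S := {i₀ : Fin N | ∃ β : Fin N → ℝ,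
    ∀ j k, M i₀ j k = ∑ z ∈ Finset.univ.erase i₀, β z * M z j k}
  set L := Fintype.linearCombination ℝ fun z (j : Fin T) (k : Fin K) => V j z * W k z
  have hLU : L ∘ U = M := by
    ext i j k
    simp [L, Fintype.linearCombination_apply, Finset.sum_apply, hM, mul_assoc]
  have hdonors : {i | M i ∈ span ℝ (M '' ↑(univ.erase i))} = S := by
    ext i
    simp only [S, Set.mem_ofPred_eq, mem_span_image_finset_iff_exists_fun', funext_iff,
      Finset.sum_apply, Pi.smul_apply, smul_eq_mul, eq_comm]
  have hcount : N ≤ S.ncard + r := by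
    rw [← Nat.sub_le_iff_le_add, ← hdonors, ← hLU]
    simpa using (card_sub_finrank_le_ncard_mem_span_image_erase (𝕜 := ℝ) U).trans
      (Set.ncard_le_ncard (setOf_mem_span_image_erase_subset_comp L U))
  have hNpos : (0 : ℝ) < N := by exact_mod_cast hN
  rw [one_sub_div hNpos.ne']
  gcongr
  have : (N : ℝ) ≤ S.ncard + r := by exact_mod_cast hcount
  linarith
end

section
/- Let 𝓣 = [T_{ijk}] ∈ ℝ^{N×T×K} be a third-order tensor. Suppose (i) every frontal slice 𝓣_{·,·,k} ∈ ℝ^{N×T} (k ∈ [K]) has matrix rank at most m, and (ii) 𝓣 has at most s distinct frontal slices, i.e., the set {𝓣_{·,·,k} : k ∈ [K]} of matrices has cardinality at most s. Then the CP rank of 𝓣 is at most m · s, i.e., there exist U ∈ ℝ^{N×(ms)}, V ∈ ℝ^{T×(ms)}, W ∈ ℝ^{K×(ms)} with T_{ijk} = Σ_{z=1}^{ms} U_{iz} V_{jz} W_{kz} for all (i,j,k). -/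
/-!
Every distinct frontal slice `A` has rank at most `m`, so it factors as `A = U_A V_A` through
`ℝ^m`. Writing `𝓣_{ijk} = ∑_A A_{ij} [𝓣_{··k} = A]` over the at most `s` distinct slices and
expanding each `A` exhibits `𝓣` as a sum of `m · s` rank-one tensors `u ⊗ v ⊗ w`, where `w` is the
indicator of the slices equal to `A`; zero terms pad the count to exactly `m * s`.
-/

open Function Matrix

section Padding

variable {R : Type*} [CommSemiring R]

theorem Fintype.sum_mul_extend_zero {ι κ : Type*} [Fintype ι] [Fintype κ] (e : ι ↪ κ)
    (f : ι → R) (g : κ → R) : ∑ z, g z * extend e f 0 z = ∑ y, g (e y) * f y := by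
  refine (Fintype.sum_of_injective e e.injective _ _ (fun z hz => ?_) fun y => ?_).symm
  · rw [extend_apply' _ _ _ (by simpa using hz), Pi.zero_apply, mul_zero]
  · rw [e.injective.extend_apply]

theorem Matrix.mul_eq_extend_mul_extend {m n ι κ : Type*} [Fintype ι] [Fintype κ] (e : ι ↪ κ)
    (U : Matrix m ι R) (V : Matrix ι n R) :
    U * V = (of fun i => extend e (U i) 0) * of fun z j => extend e (fun y => V y j) 0 z := by
  ext i j
  simp only [mul_apply, of_apply, Fintype.sum_mul_extend_zero, e.injective.extend_apply]

end Padding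

theorem Matrix.exists_eq_mul_of_rank_le {K m n : Type*} [Field K] [Fintype n] {r : ℕ}
    (A : Matrix m n K) (h : A.rank ≤ r) :
    ∃ (U : Matrix m (Fin r) K) (V : Matrix (Fin r) n K), A = U * V := by
  have : FiniteDimensional K (Submodule.span K (Set.range A.col)) :=
    FiniteDimensional.span_of_finite K (Set.finite_range _)
  let b := Module.finBasisOfFinrankEq K _ (rank_eq_finrank_span_cols A).symm
  have hcol : ∀ j, A.col j ∈ Submodule.span K (Set.range A.col) :=
    fun j => Submodule.subset_span ⟨j, rfl⟩
  have hA : A = (of fun i z => (b z : m → K) i) * of fun z j => b.repr ⟨_, hcol j⟩ z := by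
    ext i j
    have := congrArg (fun v : Submodule.span K (Set.range A.col) => (v : m → K) i)
      (b.sum_repr ⟨_, hcol j⟩)
    simp only [Submodule.coe_sum, Submodule.coe_smul, Finset.sum_apply, Pi.smul_apply,
      smul_eq_mul] at this
    simpa only [mul_apply, of_apply, col_apply, mul_comm] using this.symm
  exact ⟨_, _, hA.trans (Matrix.mul_eq_extend_mul_extend (Fin.castLEEmb h) _ _)⟩

namespace Tensor

variable {R I J L : Type*} [CommSemiring R]

def frontalSlice (𝓣 : I → J → L → R) (k : L) : Matrix I J R :=
  of fun i j => 𝓣 i j k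

/-- `𝓣` is a sum of rank-one tensors indexed by `ι`, i.e. its CP rank is at most `card ι`. -/
def HasCPDecomposition (𝓣 : I → J → L → R) (ι : Type*) [Fintype ι] : Prop :=
  ∃ (U : I → ι → R) (V : J → ι → R) (W : L → ι → R),
    ∀ i j k, 𝓣 i j k = ∑ z, U i z * V j z * W k z

theorem HasCPDecomposition.of_embedding {𝓣 : I → J → L → R} {ι κ : Type*} [Fintype ι]
    [Fintype κ] (h : HasCPDecomposition 𝓣 ι) (e : ι ↪ κ) : HasCPDecomposition 𝓣 κ := by
  obtain ⟨U, V, W, hUVW⟩ := h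
  refine ⟨fun i => extend e (U i) 0, fun j => extend e (V j) 0, fun k => extend e (W k) 0,
    fun i j k => ?_⟩
  simp only [hUVW, Fintype.sum_mul_extend_zero, e.injective.extend_apply]

theorem hasCPDecomposition_of_eq_sum_mul {𝓣 : I → J → L → R} {ι α : Type*} [Fintype ι]
    [Fintype α] (U : α → Matrix I ι R) (V : α → Matrix ι J R) (w : L → α → R)
    (h : ∀ i j k, 𝓣 i j k = ∑ a, (U a * V a) i j * w k a) :
    HasCPDecomposition 𝓣 (ι × α) := by
  refine ⟨fun i p => U p.2 i p.1, fun j p => V p.2 p.1 j, fun k p => w k p.2, fun i j k => ?_⟩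
  simp only [h, mul_apply, Finset.sum_mul, Fintype.sum_prod_type]
  exact Finset.sum_comm

open Classical in
theorem eq_sum_frontalSlice_mul_ite (𝓣 : I → J → L → R)
    [Fintype (Set.range (frontalSlice 𝓣))] (i : I) (j : J) (k : L) :
    𝓣 i j k = ∑ A : Set.range (frontalSlice 𝓣),
      (A : Matrix I J R) i j * if frontalSlice 𝓣 k = A then 1 else 0 := by
  rw [Fintype.sum_eq_single ⟨_, k, rfl⟩ fun A hA => by
    rw [if_neg fun h => hA (Subtype.ext h.symm), mul_zero]]
  simp [frontalSlice]

theorem hasCPDecomposition_of_rank_frontalSlice_le {K : Type*} [Field K] [Fintype J]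
    {𝓣 : I → J → L → K} [Fintype (Set.range (frontalSlice 𝓣))] {m : ℕ}
    (h : ∀ k, (frontalSlice 𝓣 k).rank ≤ m) :
    HasCPDecomposition 𝓣 (Fin m × Set.range (frontalSlice 𝓣)) := by
  classical
  choose U V hUV using fun A : Set.range (frontalSlice 𝓣) =>
    exists_eq_mul_of_rank_le (A : Matrix I J K) (by obtain ⟨_, k, rfl⟩ := A; exact h k)
  refine hasCPDecomposition_of_eq_sum_mul U V (fun k A => if frontalSlice 𝓣 k = A then 1 else 0)
    fun i j k => ?_
  simp only [← hUV]
  exact eq_sum_frontalSlice_mul_ite 𝓣 i j k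

end Tensor

/-- If every frontal slice of a third-order tensor has matrix rank at most `m`
and the tensor has at most `s` distinct frontal slices, then its CP rank is at
most `m * s`. -/
theorem stmt_6 (N T K m s : ℕ) (𝓣 : Fin N → Fin T → Fin K → ℝ)
    (h1 : ∀ k : Fin K, (Matrix.of fun i j => 𝓣 i j k : Matrix (Fin N) (Fin T) ℝ).rank ≤ m)
    (h2 : (Set.range fun k : Fin K =>
      (Matrix.of fun i j => 𝓣 i j k : Matrix (Fin N) (Fin T) ℝ)).ncard ≤ s) :
    ∃ (U : Fin N → Fin (m * s) → ℝ) (V : Fin T → Fin (m * s) → ℝ)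
      (W : Fin K → Fin (m * s) → ℝ),
      ∀ i j k, 𝓣 i j k = ∑ z, U i z * V j z * W k z := by
  classical
  obtain ⟨e⟩ : Nonempty (Set.range (Tensor.frontalSlice 𝓣) ↪ Fin s) :=
    Embedding.nonempty_of_card_le <| by
      rwa [Fintype.card_fin, ← Nat.card_eq_fintype_card, Nat.card_coe_set_eq]
  exact (Tensor.hasCPDecomposition_of_rank_frontalSlice_le h1).of_embedding
    ((Embedding.refl _).prodMap e |>.trans finProdFinEquiv.toEmbedding)
end
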